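/- arXiv:0809.3293 — 4 statements merged into one kernel-verified Lean document; each statement's English description precedes it below -/
import Mathlib

section
/- Under the hypotheses of the cancellation lemma, the cancelled complex (C', d') is chain homotopy equivalent to (C, d); in particular H(C', d') ≅ H(C, d). -/
/-- The cancelled differential of the cancellation lemma (matrix convention:
`d(x_i) = ∑ j, D i j • x_j`, so composition "first f then g" has matrix `F * G`). -/
def cancelD {ι : Type} (D : Matrix ι ι (ZMod 2)) (k l : ι) :
    Matrix {i : ι // i ≠ k ∧ i ≠ l} {i : ι // i ≠ k ∧ i ≠ l} (ZMod 2) :=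
  Matrix.of fun i j => D i.1 j.1 + D i.1 l * D k j.1

lemma sum_ne_aux {ι : Type} [Fintype ι] [DecidableEq ι] (k l : ι) (hkl : k ≠ l)
    (g : ι → ZMod 2) :
    ∑ m : {i : ι // i ≠ k ∧ i ≠ l}, g m.1 = (∑ i, g i) + g k + g l := by
  rw [← Finset.sum_subtype (Finset.univ.filter (fun i => i ≠ k ∧ i ≠ l)) (by simp) g]
  rw [Finset.sum_filter]
  have : ∀ i, (if i ≠ k ∧ i ≠ l then g i else 0)
      = g i + ((if i = k then g i else 0) + (if i = l then g i else 0)) := by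
    intro i
    by_cases h1 : i = k
    · subst h1; simp [hkl, CharTwo.add_self_eq_zero]
    · by_cases h2 : i = l
      · subst h2; simp [h1, CharTwo.add_self_eq_zero]
      · simp [h1, h2]
  simp_rw [this]
  rw [Finset.sum_add_distrib, Finset.sum_add_distrib, Finset.sum_ite_eq', Finset.sum_ite_eq']
  simp [add_assoc]

/-- Under the hypotheses of the cancellation lemma, `(C', d')` is chain homotopy
equivalent to `(C, d)`: there are chain maps `π : C → C'` (matrix `P`) and
`ι : C' → C` (matrix `E`) with `π ∘ ι = id` and `ι ∘ π` chain homotopic to `id`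
(over 𝔽₂, where `-1 = 1`). In particular `H(C', d') ≅ H(C, d)`. -/
theorem stmt2 {ι : Type} [Fintype ι] [DecidableEq ι]
    (D : Matrix ι ι (ZMod 2)) (hD : D * D = 0)
    (k l : ι) (hkl : k ≠ l) (hone : D k l = 1) :
    ∃ (P : Matrix ι {i : ι // i ≠ k ∧ i ≠ l} (ZMod 2))
      (E : Matrix {i : ι // i ≠ k ∧ i ≠ l} ι (ZMod 2))
      (H : Matrix ι ι (ZMod 2)),
      D * P = P * cancelD D k l ∧
      E * D = cancelD D k l * E ∧
      E * P = 1 ∧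
      1 + P * E = D * H + H * D := by
  have hDD : ∀ a b, ∑ j, D a j * D j b = 0 := fun a b => by
    have := congrFun (congrFun hD a) b; simpa [Matrix.mul_apply] using this
  set P : Matrix ι {i : ι // i ≠ k ∧ i ≠ l} (ZMod 2) :=
    Matrix.of fun i m => (if i = m.1 then 1 else 0) + (if i = l then 1 else 0) * D k m.1 with hP
  have h1 : D * P = P * cancelD D k l := by
    ext i n
    rw [Matrix.mul_apply, Matrix.mul_apply]
    simp only [hP, cancelD, Matrix.of_apply]
    rw [sum_ne_aux k l hkl (fun x => ((if i = x then (1:ZMod 2) else 0) + (if i = l then 1 else 0) * D k x) * (D x n.1 + D x l * D k n.1))]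
    simp only [mul_add, add_mul, mul_ite, ite_mul, mul_zero, zero_mul, mul_one, one_mul,
      Finset.sum_add_distrib, Finset.sum_ite_eq, Finset.sum_ite_eq', Finset.mem_univ, if_true,
      Finset.mul_sum, Finset.sum_mul]
    simp only [← mul_assoc, ← Finset.sum_mul, hDD, hone, zero_mul, mul_one, one_mul]
    by_cases hil : i = l
    · subst hil
      simp [Ne.symm hkl, hDD, CharTwo.add_self_eq_zero]
      all_goals rw [← Finset.sum_mul, hDD, zero_mul]
    · by_cases hik : i = k
      · subst hik
        simp [hkl, CharTwo.add_self_eq_zero]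
      · simp [hil, hik]
  set E : Matrix {i : ι // i ≠ k ∧ i ≠ l} ι (ZMod 2) :=
    Matrix.of fun m i => (if m.1 = i then 1 else 0) + D m.1 l * (if i = k then 1 else 0) with hE
  set H : Matrix ι ι (ZMod 2) :=
    Matrix.of fun i j => (if i = l then 1 else 0) * (if j = k then 1 else 0) with hH
  have h2 : E * D = cancelD D k l * E := by
    ext m j
    rw [Matrix.mul_apply, Matrix.mul_apply]
    simp only [hE, cancelD, Matrix.of_apply]
    rw [sum_ne_aux k l hkl (fun t => (D m.1 t + D m.1 l * D k t) * ((if t = j then (1:ZMod 2) else 0) + D t l * (if j = k then 1 else 0)))]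
    simp only [mul_add, add_mul, mul_ite, ite_mul, mul_zero, zero_mul, mul_one, one_mul,
      Finset.sum_add_distrib, Finset.sum_ite_eq, Finset.sum_ite_eq', Finset.mem_univ, if_true]
    obtain ⟨hmk, hml⟩ := m.2
    by_cases hjk : j = k
    · simp only [hjk, eq_self_iff_true, if_true, hone, mul_one, one_mul, hmk, hml, if_false,
        Finset.sum_add_distrib, Finset.sum_ite_eq, Finset.sum_ite_eq', Finset.mem_univ, hDD,
        CharTwo.add_self_eq_zero, Finset.sum_const_zero, add_zero, zero_add, mul_assoc,
        ← Finset.mul_sum, mul_zero, ite_self]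
    · by_cases hjl : j = l
      · simp only [hjl, eq_self_iff_true, if_true, hone, mul_one, one_mul, hmk, hml,
          Ne.symm hkl, hkl, if_false, Finset.sum_add_distrib, Finset.sum_ite_eq,
          Finset.sum_ite_eq', Finset.mem_univ, hDD, CharTwo.add_self_eq_zero,
          Finset.sum_const_zero, add_zero, zero_add]
      · simp only [hjk, hjl, eq_self_iff_true, if_true, hone, mul_one, one_mul, hmk, hml,
          if_false, Finset.sum_add_distrib, Finset.sum_ite_eq, Finset.sum_ite_eq',
          Finset.mem_univ, hDD, CharTwo.add_self_eq_zero, Finset.sum_const_zero, add_zero,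
          zero_add, mul_zero, ite_self, Ne.symm hjk, Ne.symm hjl]
  have h3 : E * P = 1 := by
    ext m n
    rw [Matrix.mul_apply]
    simp only [hE, hP, Matrix.of_apply, Matrix.one_apply]
    obtain ⟨hmk, hml⟩ := m.2
    obtain ⟨hnk, hnl⟩ := n.2
    simp only [mul_add, add_mul, mul_ite, ite_mul, mul_zero, zero_mul, mul_one, one_mul,
      Finset.sum_add_distrib, Finset.sum_ite_eq, Finset.sum_ite_eq', Finset.mem_univ, if_true]
    simp [hnk, Ne.symm hkl, hml, Subtype.ext_iff]
  have h4 : 1 + P * E = D * H + H * D := by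
    ext i j
    rw [Matrix.add_apply, Matrix.add_apply, Matrix.mul_apply, Matrix.mul_apply, Matrix.mul_apply]
    simp only [hE, hP, hH, Matrix.of_apply, Matrix.one_apply]
    rw [sum_ne_aux k l hkl (fun t => ((if i = t then (1:ZMod 2) else 0) + (if i = l then 1 else 0) * D k t) * ((if t = j then 1 else 0) + D t l * (if j = k then 1 else 0)))]
    simp only [mul_add, add_mul, mul_ite, ite_mul, mul_zero, zero_mul, mul_one, one_mul,
      Finset.sum_add_distrib, Finset.sum_ite_eq, Finset.sum_ite_eq', Finset.mem_univ, if_true]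
    by_cases hjk : j = k
    · by_cases hil : i = l
      · simp only [hjk, hil, eq_self_iff_true, if_true, Ne.symm hkl, hkl, if_false, hone,
          mul_one, one_mul, Finset.sum_add_distrib, Finset.sum_ite_eq, Finset.sum_ite_eq',
          Finset.mem_univ, hDD, CharTwo.add_self_eq_zero, Finset.sum_const_zero, add_zero,
          zero_add]
        ring
      · by_cases hik : i = k
        · simp only [hjk, hik, hil, eq_self_iff_true, if_true, Ne.symm hkl, hkl, if_false, hone,
            mul_one, one_mul, Finset.sum_add_distrib, Finset.sum_ite_eq, Finset.sum_ite_eq',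
            Finset.mem_univ, hDD, CharTwo.add_self_eq_zero, Finset.sum_const_zero, add_zero,
            zero_add]
        · simp only [hjk, hik, hil, eq_self_iff_true, if_true, Ne.symm hkl, hkl, if_false, hone,
            mul_one, one_mul, Finset.sum_add_distrib, Finset.sum_ite_eq, Finset.sum_ite_eq',
            Finset.mem_univ, hDD, CharTwo.add_self_eq_zero, Finset.sum_const_zero, add_zero,
            zero_add, if_false]
    · simp only [hjk, if_false, Finset.sum_const_zero, hone, add_zero, zero_add,
        Ne.symm hjk, CharTwo.add_self_eq_zero, ite_self]
      rw [← add_assoc, CharTwo.add_self_eq_zero, zero_add]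
  exact ⟨P, E, H, h1, h2, h3, h4⟩
end

section
/- Let (C, d) be a finite-dimensional chain complex over 𝔽₂ equipped with a ℤ-grading h inducing a filtration, with homogeneous basis, and suppose that every component of d strictly increases h by at least k − 1 for some k ≥ 2 (i.e., (C,d) is the complex obtained at stage k−1 of the cancellation process). Let c ∈ C be a cycle with h(c) = 0, and suppose the complex's E^k page (homology with respect to the grading-(k−1)-shifting part of d, as a graded vector space) is supported in non-positive h-gradings. If c represents zero in the E^k page, then c is a boundary in (C, d). -/
/-- Let `(C, d)` be a finite-dimensional chain complex over 𝔽₂ with homogeneous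
basis `ι` and ℤ-grading `g`, such that every component of `d` strictly increases
the grading by at least `k − 1` (for some `k ≥ 2`).  Membership of `x` in the
filtration level `F_J` is expressed as `∀ i, x i ≠ 0 → J ≤ g i`, and
homogeneity of degree `J` as `∀ i, x i ≠ 0 → g i = J`.  Let `c` be a cycle of
grading `0`.  Suppose:
* (the `E^k` page is supported in non-positive gradings) every homogeneous
  element `x` of grading `J ≥ 1` which is a cycle for the grading-`(k−1)` part of
  `d` (i.e. `d x ∈ F_{J+k}`) is such a boundary modulo `F_{J+1}`; and
* (`c` represents zero in `E^k`) there is `y` with `g(y) = −(k−1)` and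
  `d y + c ∈ F₁` (coefficients in 𝔽₂, so `+ = −`).
Then `c` is a boundary in `(C, d)`. -/
theorem stmt12 {ι : Type} [Fintype ι] (g : ι → ℤ)
    (d : (ι → ZMod 2) →ₗ[ZMod 2] (ι → ZMod 2)) (hd2 : d ∘ₗ d = 0)
    (k : ℕ) (hk : 2 ≤ k)
    (hraise : ∀ (J : ℤ) (x : ι → ZMod 2), (∀ i, x i ≠ 0 → J ≤ g i) →
      ∀ i, d x i ≠ 0 → J + ((k : ℤ) - 1) ≤ g i)
    (c : ι → ZMod 2) (hchom : ∀ i, c i ≠ 0 → g i = 0) (hccyc : d c = 0)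
    (hEk : ∀ J : ℤ, 1 ≤ J → ∀ x : ι → ZMod 2,
      (∀ i, x i ≠ 0 → g i = J) →
      (∀ i, d x i ≠ 0 → J + (k : ℤ) ≤ g i) →
      ∃ y : ι → ZMod 2, (∀ i, y i ≠ 0 → g i = J - ((k : ℤ) - 1)) ∧
        (∀ i, (d y + x) i ≠ 0 → J + 1 ≤ g i))
    (hzero : ∃ y : ι → ZMod 2, (∀ i, y i ≠ 0 → g i = -((k : ℤ) - 1)) ∧
      (∀ i, (d y + c) i ≠ 0 → 1 ≤ g i)) :
    ∃ y' : ι → ZMod 2, d y' = c := by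
  
  -- induction: we can push the error term deeper and deeper into the filtration
  have key : ∀ n : ℕ, ∃ y : ι → ZMod 2, ∀ i, (d y + c) i ≠ 0 → 1 + (n : ℤ) ≤ g i := by
    intro n
    induction n with
    | zero =>
      obtain ⟨y, -, hy⟩ := hzero
      exact ⟨y, by simpa using hy⟩
    | succ n ih =>
      obtain ⟨y, hy⟩ := ih
      set J : ℤ := 1 + (n : ℤ) with hJ
      set e : ι → ZMod 2 := d y + c with he
      -- split e into its grading-J part x and the rest e'
      set x : ι → ZMod 2 := fun i => if g i = J then e i else 0 with hx
      set e' : ι → ZMod 2 := fun i => if g i = J then 0 else e i with he'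
      have hsplit : ∀ i, e i = x i + e' i := by
        intro i; simp only [hx, he']
        by_cases h : g i = J <;> simp [h]
      have hxhom : ∀ i, x i ≠ 0 → g i = J := by
        intro i hi; simp only [hx] at hi
        by_cases h : g i = J; · exact h
        · simp [h] at hi
      have he'f : ∀ i, e' i ≠ 0 → J + 1 ≤ g i := by
        intro i hi; simp only [he'] at hi
        by_cases h : g i = J
        · simp [h] at hi
        · simp only [h, if_false] at hi
          have := hy i hi
          omega
      have hde : d e = 0 := by
        rw [he, map_add, hccyc]
        have : d (d y) = 0 := by
          have := congrArg (fun f => f y) hd2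
          simpa using this
        simp [this]
      -- d x = - d e'
      have hdx : ∀ i, d x i ≠ 0 → J + (k : ℤ) ≤ g i := by
        intro i hi
        have hxe : x = e - e' := by
          funext j; have := hsplit j; simp [this]
        have hdx' : d x i = - d e' i := by
          rw [hxe, map_sub]
          simp [hde]
        have hne : d e' i ≠ 0 := by
          intro h; rw [hdx', h] at hi; simp at hi
        have := hraise (J + 1) e' he'f i hne
        omega
      have hJ1 : 1 ≤ J := by omega
      obtain ⟨y₁, -, hy₁⟩ := hEk J hJ1 x hxhom hdx
      refine ⟨y + y₁, ?_⟩
      intro i hi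
      have hcomb : (d (y + y₁) + c) i = (d y₁ + x) i + e' i := by
        have h1 : (d (y + y₁) + c) i = (d y₁) i + e i := by
          rw [map_add]; simp [he]; ring
        rw [h1, hsplit i]; simp; ring
      rw [hcomb] at hi
      have : (d y₁ + x) i ≠ 0 ∨ e' i ≠ 0 := by
        by_contra h
        push_neg at h
        rw [h.1, h.2] at hi; simp at hi
      have hle : J + 1 ≤ g i := by
        rcases this with h | h
        · exact hy₁ i h
        · have := he'f i h; omega
      push_cast
      omega
  -- choose n large enough
  set B : ℕ := Finset.univ.sup (fun i => (g i).toNat) with hB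
  obtain ⟨y, hy⟩ := key B
  refine ⟨y, ?_⟩
  have hze : ∀ i, (d y + c) i = 0 := by
    intro i
    by_contra h
    have h1 := hy i h
    have h2 : (g i).toNat ≤ B := hB ▸ Finset.le_sup (f := fun j => (g j).toNat) (Finset.mem_univ i)
    omega
  funext i
  have := hze i
  simp only [Pi.add_apply] at this
  revert this
  generalize d y i = a
  generalize c i = b
  revert a b
  decide
end

section
/- Define the Poincaré polynomial P(h,q) = h⁰q⁸ + h²q¹² + h³q¹⁴ + h⁴q¹⁴ + h⁵q¹⁸ + h⁶q¹⁸ + h⁷q²⁰ (the reduced Khovanov homology of T(3,5) over 𝔽₂). Suppose a sequence of bigraded differentials D^k of bidegree (k, 2k−2) for k ≥ 2 acts on the corresponding bigraded 𝔽₂-vector space, such that the generator in bidegree (0,8) survives to the final page and the final page has total dimension 1. Then the only possibility is: D² cancels the pairs ((2,12),(4,14)) and ((5,18),(7,20)), D³ cancels the pair ((3,14),(6,18)), and the pages have Poincaré polynomials E³ = h⁰q⁸ + h³q¹⁴ + h⁶q¹⁸ and E⁴ = E^∞ = h⁰q⁸. -/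
/-- Dimension function of the reduced Khovanov homology of `T(3,5)` over 𝔽₂
(the `E²` page), with bidegrees (homological grading, quantum grading). -/
def khT35 : ℤ × ℤ → ℕ := fun p =>
  if p = (0, 8) ∨ p = (2, 12) ∨ p = (3, 14) ∨ p = (4, 14) ∨ p = (5, 18) ∨
      p = (6, 18) ∨ p = (7, 20) then 1 else 0

/-- The forced `E³` page for `T(3,5)`: `h⁰q⁸ + h³q¹⁴ + h⁶q¹⁸`. -/
def E3T35 : ℤ × ℤ → ℕ := fun p =>
  if p = (0, 8) ∨ p = (3, 14) ∨ p = (6, 18) then 1 else 0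

/-- The forced `E⁴ = E^∞` page for `T(3,5)`: `h⁰q⁸`. -/
def EinfT35 : ℤ × ℤ → ℕ := fun p => if p = (0, 8) then 1 else 0

lemma kh_zero' (i j : ℤ)
    (h : ¬((i = 0 ∧ j = 8) ∨ (i = 2 ∧ j = 12) ∨ (i = 3 ∧ j = 14) ∨ (i = 4 ∧ j = 14) ∨
      (i = 5 ∧ j = 18) ∨ (i = 6 ∧ j = 18) ∨ (i = 7 ∧ j = 20))) : khT35 (i, j) = 0 := by
  simp only [khT35, Prod.mk.injEq, ite_eq_right_iff]
  intro hc; omega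

lemma crunch15 (a b c b4 c4 b5 f3B f3C f3D f3E f3F f3G f4B f4C f4D f4E f4F f4G
    f5B f5C f5D f5E f5F f5G f6B f6C f6D f6E f6F f6G : ℕ)
    (h2B : f3B + a = 1) (h2C : f3C = 1) (h2D : f3D + a = 1) (h2E : f3E + b = 1)
    (h2F : f3F = 1) (h2G : f3G + b = 1) (h3B : f4B = f3B) (h3C : f4C + c = f3C)
    (h3D : f4D = f3D) (h3E : f4E = f3E) (h3F : f4F + c = f3F) (h3G : f4G = f3G)
    (h4B : f5B + b4 = f4B) (h4C : f5C + c4 = f4C) (h4D : f5D = f4D) (h4E : f5E = f4E)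
    (h4F : f5F + b4 = f4F) (h4G : f5G + c4 = f4G) (h5B : f6B + b5 = f5B) (h5C : f6C = f5C)
    (h5D : f6D = f5D) (h5E : f6E = f5E) (h5F : f6F = f5F) (h5G : f6G + b5 = f5G)
    (hsum : 1 + f6B + f6C + f6D + f6E + f6F + f6G = 1) :
    a = 1 ∧ b = 1 ∧ c = 1 ∧ b4 = 0 ∧ c4 = 0 ∧ b5 = 0 ∧
    f3B = 0 ∧ f3C = 1 ∧ f3D = 0 ∧ f3E = 0 ∧ f3F = 1 ∧ f3G = 0 ∧
    f4B = 0 ∧ f4C = 0 ∧ f4D = 0 ∧ f4E = 0 ∧ f4F = 0 ∧ f4G = 0 := by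
  omega

set_option maxHeartbeats 1600000 in
/-- Spectral-sequence bookkeeping for `T(3,5)`: `f k` is the dimension function
of the `E^k` page, and `r k (i,j)` is the rank of the component of the
differential `D^k` (of bidegree `(k, 2k−2)`) starting at bidegree `(i,j)`.
Hypotheses: the `E²` page is `Kh(T(3,5))`; rank bounds and `(D^k)² = 0`
(the incoming and outgoing ranks at a bidegree are bounded by its dimension);
the page recursion; the generator in bidegree `(0,8)` survives; and the final
(stable) page has total dimension 1.  Conclusion: the differentials are
uniquely determined — `D²` cancels `((2,12),(4,14))` and `((5,18),(7,20))`,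
`D³` cancels `((3,14),(6,18))`, every other component vanishes, and
`E³ = h⁰q⁸ + h³q¹⁴ + h⁶q¹⁸`, `E^k = h⁰q⁸` for `k ≥ 4`. -/
theorem stmt15 (f : ℕ → ℤ × ℤ → ℕ) (r : ℕ → ℤ × ℤ → ℕ)
    (hE2 : f 2 = khT35)
    (hrank : ∀ k, 2 ≤ k → ∀ i j : ℤ,
      r k (i, j) ≤ f k (i, j) ∧
      r k (i - (k : ℤ), j - (2 * (k : ℤ) - 2)) + r k (i, j) ≤ f k (i, j))
    (hrec : ∀ k, 2 ≤ k → ∀ i j : ℤ,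
      f (k + 1) (i, j)
        = f k (i, j) - r k (i, j) - r k (i - (k : ℤ), j - (2 * (k : ℤ) - 2)))
    (hsurv : ∀ k, 2 ≤ k → f k (0, 8) = 1)
    (hfin : ∃ K, 2 ≤ K ∧ (∀ k, K ≤ k → ∀ p, r k p = 0) ∧
      f K (0, 8) + f K (2, 12) + f K (3, 14) + f K (4, 14) + f K (5, 18)
        + f K (6, 18) + f K (7, 20) = 1) :
    r 2 (2, 12) = 1 ∧ r 2 (5, 18) = 1 ∧ r 3 (3, 14) = 1 ∧
    (∀ k, 2 ≤ k → ∀ p : ℤ × ℤ,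
      ¬(k = 2 ∧ p = (2, 12)) → ¬(k = 2 ∧ p = (5, 18)) →
      ¬(k = 3 ∧ p = (3, 14)) → r k p = 0) ∧
    f 3 = E3T35 ∧ (∀ k, 4 ≤ k → f k = EinfT35) := by
  -- monotonicity of pages
  have hmono : ∀ k, 2 ≤ k → ∀ i j : ℤ, f (k+1) (i,j) ≤ f k (i,j) := by
    intro k hk i j; rw [hrec k hk i j]; omega
  -- pages bounded by the E2 page
  have hle : ∀ k, 2 ≤ k → ∀ i j : ℤ, f k (i,j) ≤ khT35 (i,j) := by
    intro k hk
    induction k, hk using Nat.le_induction with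
    | base => intro i j; rw [hE2]
    | succ n hn ih => intro i j; exact le_trans (hmono n hn i j) (ih i j)
  -- rank bounded by the source dimension
  have hrs : ∀ k, 2 ≤ k → ∀ i j : ℤ, r k (i,j) ≤ f k (i,j) := fun k hk i j => (hrank k hk i j).1
  -- rank bounded by the target dimension
  have hrt : ∀ k, 2 ≤ k → ∀ i j : ℤ, r k (i,j) ≤ f k (i + (k:ℤ), j + (2*(k:ℤ) - 2)) := by
    intro k hk i j
    have h := (hrank k hk (i + (k:ℤ)) (j + (2*(k:ℤ) - 2))).2
    rw [show i + (k:ℤ) - (k:ℤ) = i by ring,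
        show j + (2*(k:ℤ) - 2) - (2*(k:ℤ) - 2) = j by ring] at h
    omega
  -- the surviving generator has no outgoing differential
  have rA : ∀ k, 2 ≤ k → r k (0, 8) = 0 := by
    intro k hk
    have h := hrec k hk 0 8
    rw [hsurv k hk, hsurv (k+1) (by omega)] at h
    omega
  -- vanishing outside the six candidate components
  have hvan : ∀ k, 2 ≤ k → ∀ i j : ℤ,
      ¬((k = 2 ∧ i = 2 ∧ j = 12) ∨ (k = 2 ∧ i = 5 ∧ j = 18) ∨
        (k = 3 ∧ i = 3 ∧ j = 14) ∨ (k = 4 ∧ i = 2 ∧ j = 12) ∨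
        (k = 4 ∧ i = 3 ∧ j = 14) ∨ (k = 5 ∧ i = 2 ∧ j = 12)) →
      r k (i, j) = 0 := by
    intro k hk i j hna
    by_cases hA : i = 0 ∧ j = 8
    · obtain ⟨h1, h2⟩ := hA; subst h1; subst h2; exact rA k hk
    · have hor : khT35 (i,j) = 0 ∨ khT35 (i + (k:ℤ), j + (2*(k:ℤ) - 2)) = 0 := by
        by_cases hs : (i = 0 ∧ j = 8) ∨ (i=2∧j=12) ∨ (i=3∧j=14) ∨ (i=4∧j=14) ∨
            (i=5∧j=18) ∨ (i=6∧j=18) ∨ (i=7∧j=20)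
        · right; apply kh_zero'; omega
        · left; exact kh_zero' i j hs
      rcases hor with h | h
      · have := le_trans (hrs k hk i j) (le_trans (hle k hk i j) (le_of_eq h)); omega
      · have := le_trans (hrt k hk i j) (le_trans (hle k hk _ _) (le_of_eq h)); omega
  -- values of the E2 page at the seven generators
  have f2B : f 2 (2,12) = 1 := by rw [hE2]; simp [khT35]
  have f2C : f 2 (3,14) = 1 := by rw [hE2]; simp [khT35]
  have f2D : f 2 (4,14) = 1 := by rw [hE2]; simp [khT35]
  have f2E : f 2 (5,18) = 1 := by rw [hE2]; simp [khT35]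
  have f2F : f 2 (6,18) = 1 := by rw [hE2]; simp [khT35]
  have f2G : f 2 (7,20) = 1 := by rw [hE2]; simp [khT35]
  have e2B : f 3 (2,12) + r 2 (2,12) = 1 := by
    have q1 := hrec 2 (by norm_num) 2 12
    have q2 := (hrank 2 (by norm_num) 2 12).2
    have z0 := hvan 2 (by norm_num) 0 10 (by decide)
    have qv := f2B
    norm_num at q1 q2
    omega
  have e2C : f 3 (3,14) = 1 := by
    have q1 := hrec 2 (by norm_num) 3 14
    have q2 := (hrank 2 (by norm_num) 3 14).2
    have z0 := hvan 2 (by norm_num) 3 14 (by decide)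
    have z1 := hvan 2 (by norm_num) 1 12 (by decide)
    have qv := f2C
    norm_num at q1 q2
    omega
  have e2D : f 3 (4,14) + r 2 (2,12) = 1 := by
    have q1 := hrec 2 (by norm_num) 4 14
    have q2 := (hrank 2 (by norm_num) 4 14).2
    have z0 := hvan 2 (by norm_num) 4 14 (by decide)
    have qv := f2D
    norm_num at q1 q2
    omega
  have e2E : f 3 (5,18) + r 2 (5,18) = 1 := by
    have q1 := hrec 2 (by norm_num) 5 18
    have q2 := (hrank 2 (by norm_num) 5 18).2
    have z0 := hvan 2 (by norm_num) 3 16 (by decide)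
    have qv := f2E
    norm_num at q1 q2
    omega
  have e2F : f 3 (6,18) = 1 := by
    have q1 := hrec 2 (by norm_num) 6 18
    have q2 := (hrank 2 (by norm_num) 6 18).2
    have z0 := hvan 2 (by norm_num) 6 18 (by decide)
    have z1 := hvan 2 (by norm_num) 4 16 (by decide)
    have qv := f2F
    norm_num at q1 q2
    omega
  have e2G : f 3 (7,20) + r 2 (5,18) = 1 := by
    have q1 := hrec 2 (by norm_num) 7 20
    have q2 := (hrank 2 (by norm_num) 7 20).2
    have z0 := hvan 2 (by norm_num) 7 20 (by decide)
    have qv := f2G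
    norm_num at q1 q2
    omega
  have e3B : f 4 (2,12) = f 3 (2,12) := by
    have q1 := hrec 3 (by norm_num) 2 12
    have q2 := (hrank 3 (by norm_num) 2 12).2
    have z0 := hvan 3 (by norm_num) 2 12 (by decide)
    have z1 := hvan 3 (by norm_num) (-1) 8 (by decide)
    norm_num at q1 q2
    omega
  have e3C : f 4 (3,14) + r 3 (3,14) = f 3 (3,14) := by
    have q1 := hrec 3 (by norm_num) 3 14
    have q2 := (hrank 3 (by norm_num) 3 14).2
    have z0 := hvan 3 (by norm_num) 0 10 (by decide)
    norm_num at q1 q2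
    omega
  have e3D : f 4 (4,14) = f 3 (4,14) := by
    have q1 := hrec 3 (by norm_num) 4 14
    have q2 := (hrank 3 (by norm_num) 4 14).2
    have z0 := hvan 3 (by norm_num) 4 14 (by decide)
    have z1 := hvan 3 (by norm_num) 1 10 (by decide)
    norm_num at q1 q2
    omega
  have e3E : f 4 (5,18) = f 3 (5,18) := by
    have q1 := hrec 3 (by norm_num) 5 18
    have q2 := (hrank 3 (by norm_num) 5 18).2
    have z0 := hvan 3 (by norm_num) 5 18 (by decide)
    have z1 := hvan 3 (by norm_num) 2 14 (by decide)
    norm_num at q1 q2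
    omega
  have e3F : f 4 (6,18) + r 3 (3,14) = f 3 (6,18) := by
    have q1 := hrec 3 (by norm_num) 6 18
    have q2 := (hrank 3 (by norm_num) 6 18).2
    have z0 := hvan 3 (by norm_num) 6 18 (by decide)
    norm_num at q1 q2
    omega
  have e3G : f 4 (7,20) = f 3 (7,20) := by
    have q1 := hrec 3 (by norm_num) 7 20
    have q2 := (hrank 3 (by norm_num) 7 20).2
    have z0 := hvan 3 (by norm_num) 7 20 (by decide)
    have z1 := hvan 3 (by norm_num) 4 16 (by decide)
    norm_num at q1 q2
    omega
  have e4B : f 5 (2,12) + r 4 (2,12) = f 4 (2,12) := by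
    have q1 := hrec 4 (by norm_num) 2 12
    have q2 := (hrank 4 (by norm_num) 2 12).2
    have z0 := hvan 4 (by norm_num) (-2) 6 (by decide)
    norm_num at q1 q2
    omega
  have e4C : f 5 (3,14) + r 4 (3,14) = f 4 (3,14) := by
    have q1 := hrec 4 (by norm_num) 3 14
    have q2 := (hrank 4 (by norm_num) 3 14).2
    have z0 := hvan 4 (by norm_num) (-1) 8 (by decide)
    norm_num at q1 q2
    omega
  have e4D : f 5 (4,14) = f 4 (4,14) := by
    have q1 := hrec 4 (by norm_num) 4 14
    have q2 := (hrank 4 (by norm_num) 4 14).2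
    have z0 := hvan 4 (by norm_num) 4 14 (by decide)
    have zA := rA 4 (by norm_num)
    norm_num at q1 q2
    omega
  have e4E : f 5 (5,18) = f 4 (5,18) := by
    have q1 := hrec 4 (by norm_num) 5 18
    have q2 := (hrank 4 (by norm_num) 5 18).2
    have z0 := hvan 4 (by norm_num) 5 18 (by decide)
    have z1 := hvan 4 (by norm_num) 1 12 (by decide)
    norm_num at q1 q2
    omega
  have e4F : f 5 (6,18) + r 4 (2,12) = f 4 (6,18) := by
    have q1 := hrec 4 (by norm_num) 6 18
    have q2 := (hrank 4 (by norm_num) 6 18).2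
    have z0 := hvan 4 (by norm_num) 6 18 (by decide)
    norm_num at q1 q2
    omega
  have e4G : f 5 (7,20) + r 4 (3,14) = f 4 (7,20) := by
    have q1 := hrec 4 (by norm_num) 7 20
    have q2 := (hrank 4 (by norm_num) 7 20).2
    have z0 := hvan 4 (by norm_num) 7 20 (by decide)
    norm_num at q1 q2
    omega
  have e5B : f 6 (2,12) + r 5 (2,12) = f 5 (2,12) := by
    have q1 := hrec 5 (by norm_num) 2 12
    have q2 := (hrank 5 (by norm_num) 2 12).2
    have z0 := hvan 5 (by norm_num) (-3) 4 (by decide)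
    norm_num at q1 q2
    omega
  have e5C : f 6 (3,14) = f 5 (3,14) := by
    have q1 := hrec 5 (by norm_num) 3 14
    have q2 := (hrank 5 (by norm_num) 3 14).2
    have z0 := hvan 5 (by norm_num) 3 14 (by decide)
    have z1 := hvan 5 (by norm_num) (-2) 6 (by decide)
    norm_num at q1 q2
    omega
  have e5D : f 6 (4,14) = f 5 (4,14) := by
    have q1 := hrec 5 (by norm_num) 4 14
    have q2 := (hrank 5 (by norm_num) 4 14).2
    have z0 := hvan 5 (by norm_num) 4 14 (by decide)
    have z1 := hvan 5 (by norm_num) (-1) 6 (by decide)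
    norm_num at q1 q2
    omega
  have e5E : f 6 (5,18) = f 5 (5,18) := by
    have q1 := hrec 5 (by norm_num) 5 18
    have q2 := (hrank 5 (by norm_num) 5 18).2
    have z0 := hvan 5 (by norm_num) 5 18 (by decide)
    have z1 := hvan 5 (by norm_num) 0 10 (by decide)
    norm_num at q1 q2
    omega
  have e5F : f 6 (6,18) = f 5 (6,18) := by
    have q1 := hrec 5 (by norm_num) 6 18
    have q2 := (hrank 5 (by norm_num) 6 18).2
    have z0 := hvan 5 (by norm_num) 6 18 (by decide)
    have z1 := hvan 5 (by norm_num) 1 10 (by decide)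
    norm_num at q1 q2
    omega
  have e5G : f 6 (7,20) + r 5 (2,12) = f 5 (7,20) := by
    have q1 := hrec 5 (by norm_num) 7 20
    have q2 := (hrank 5 (by norm_num) 7 20).2
    have z0 := hvan 5 (by norm_num) 7 20 (by decide)
    norm_num at q1 q2
    omega
  -- pages stabilize from page 6 on
  have stab6 : ∀ k, 6 ≤ k → ∀ i j : ℤ, f k (i,j) = f 6 (i,j) := by
    intro k hk
    induction k, hk using Nat.le_induction with
    | base => intro i j; rfl
    | succ n hn ih =>
      intro i j
      rw [hrec n (by omega) i j, hvan n (by omega) i j (by omega),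
        hvan n (by omega) _ _ (by omega), ← ih i j]
      omega
  obtain ⟨K, hK2, hKr, hKsum⟩ := hfin
  -- pages stabilize from page K on
  have stabK : ∀ k, K ≤ k → ∀ i j : ℤ, f k (i,j) = f K (i,j) := by
    intro k hk
    induction k, hk using Nat.le_induction with
    | base => intro i j; rfl
    | succ n hn ih =>
      intro i j
      rw [hrec n (by omega) i j, hKr n hn (i,j), hKr n hn _, ← ih i j]
      omega
  have hK6 : ∀ i j : ℤ, f K (i,j) = f 6 (i,j) := fun i j =>
    (stabK (max K 6) (le_max_left K 6) i j).symm.trans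
      (stab6 (max K 6) (le_max_right K 6) i j)
  rw [hK6 0 8, hK6 2 12, hK6 3 14, hK6 4 14, hK6 5 18, hK6 6 18, hK6 7 20,
    hsurv 6 (by norm_num)] at hKsum
  -- the decisive arithmetic: all ranks and page values are forced
  obtain ⟨ha, hb, hc, hb4, hc4, hb5, v3B, v3C, v3D, v3E, v3F, v3G,
      v4B, v4C, v4D, v4E, v4F, v4G⟩ :=
    crunch15 (r 2 (2,12)) (r 2 (5,18)) (r 3 (3,14)) (r 4 (2,12)) (r 4 (3,14)) (r 5 (2,12))
      (f 3 (2,12)) (f 3 (3,14)) (f 3 (4,14)) (f 3 (5,18)) (f 3 (6,18)) (f 3 (7,20))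
      (f 4 (2,12)) (f 4 (3,14)) (f 4 (4,14)) (f 4 (5,18)) (f 4 (6,18)) (f 4 (7,20))
      (f 5 (2,12)) (f 5 (3,14)) (f 5 (4,14)) (f 5 (5,18)) (f 5 (6,18)) (f 5 (7,20))
      (f 6 (2,12)) (f 6 (3,14)) (f 6 (4,14)) (f 6 (5,18)) (f 6 (6,18)) (f 6 (7,20))
      e2B e2C e2D e2E e2F e2G e3B e3C e3D e3E e3F e3G
      e4B e4C e4D e4E e4F e4G e5B e5C e5D e5E e5F e5G hKsum
  clear hK6 stabK stab6 hKr hK2 hKsum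
  clear f2B f2C f2D f2E f2F f2G
  clear e2B e2C e2D e2E e2F e2G e3B e3C e3D e3E e3F e3G
  clear e4B e4C e4D e4E e4F e4G e5B e5C e5D e5E e5F e5G
  have hs3 : f 3 (0,8) = 1 := hsurv 3 (by norm_num)
  have hs4 : f 4 (0,8) = 1 := hsurv 4 (by norm_num)
  refine ⟨ha, hb, hc, ?_, ?_, ?_⟩
  · -- all other differentials vanish
    intro k hk p h1 h2 h3
    obtain ⟨i, j⟩ := p
    simp only [Prod.mk.injEq] at h1 h2 h3
    by_cases q1 : k = 4 ∧ i = 2 ∧ j = 12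
    · obtain ⟨q, qi, qj⟩ := q1; subst q; subst qi; subst qj; exact hb4
    by_cases q2 : k = 4 ∧ i = 3 ∧ j = 14
    · obtain ⟨q, qi, qj⟩ := q2; subst q; subst qi; subst qj; exact hc4
    by_cases q3 : k = 5 ∧ i = 2 ∧ j = 12
    · obtain ⟨q, qi, qj⟩ := q3; subst q; subst qi; subst qj; exact hb5
    exact hvan k hk i j (by omega)
  · -- the E3 page
    funext p
    obtain ⟨i, j⟩ := p
    by_cases h : (i = 0 ∧ j = 8) ∨ (i = 3 ∧ j = 14) ∨ (i = 6 ∧ j = 18)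
    · rcases h with ⟨hi, hj⟩ | ⟨hi, hj⟩ | ⟨hi, hj⟩ <;> subst hi <;> subst hj <;>
        simp only [E3T35] <;> norm_num <;> omega
    · have hz : E3T35 (i, j) = 0 := by
        simp only [E3T35, Prod.mk.injEq, ite_eq_right_iff]
        intro hc'; omega
      rw [hz]
      by_cases h2 : (i = 2 ∧ j = 12) ∨ (i = 4 ∧ j = 14) ∨ (i = 5 ∧ j = 18) ∨ (i = 7 ∧ j = 20)
      · rcases h2 with ⟨hi, hj⟩ | ⟨hi, hj⟩ | ⟨hi, hj⟩ | ⟨hi, hj⟩ <;> subst hi <;> subst hj <;>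
          omega
      · have hlek := hle 3 (by norm_num) i j
        rw [kh_zero' i j (by omega)] at hlek
        omega
  · -- the E4 and later pages
    have h4 : f 4 = EinfT35 := by
      funext p
      obtain ⟨i, j⟩ := p
      by_cases h : i = 0 ∧ j = 8
      · obtain ⟨hi, hj⟩ := h; subst hi; subst hj
        simp only [EinfT35]; norm_num; omega
      · have hz : EinfT35 (i, j) = 0 := by
          simp only [EinfT35, Prod.mk.injEq, ite_eq_right_iff]
          intro hc'; omega
        rw [hz]
        by_cases h2 : (i = 2 ∧ j = 12) ∨ (i = 3 ∧ j = 14) ∨ (i = 4 ∧ j = 14) ∨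
            (i = 5 ∧ j = 18) ∨ (i = 6 ∧ j = 18) ∨ (i = 7 ∧ j = 20)
        · rcases h2 with ⟨hi, hj⟩ | ⟨hi, hj⟩ | ⟨hi, hj⟩ | ⟨hi, hj⟩ | ⟨hi, hj⟩ | ⟨hi, hj⟩ <;>
            subst hi <;> subst hj <;> omega
        · have hlek := hle 4 (by norm_num) i j
          rw [kh_zero' i j (by omega)] at hlek
          omega
    intro k hk
    induction k, hk using Nat.le_induction with
    | base => exact h4
    | succ n hn ih =>
      funext p
      obtain ⟨i, j⟩ := p
      by_cases h : i = 0 ∧ j = 8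
      · obtain ⟨hi, hj⟩ := h; subst hi; subst hj
        rw [hsurv (n+1) (by omega)]; simp [EinfT35]
      · have hz : EinfT35 (i, j) = 0 := by
          simp only [EinfT35, Prod.mk.injEq, ite_eq_right_iff]
          intro hc'; omega
        have hm := hmono n (by omega) i j
        rw [ih, hz] at hm
        rw [hz]
        omega
end

section
/- Define the Poincaré polynomial P(h,q) = h⁰q⁶ + h²q¹⁰ + h³q¹² + h⁴q¹² + h⁵q¹⁶ (the reduced Khovanov homology of T(3,4) over 𝔽₂). Suppose a sequence of differentials D^k of bidegree (k, 2k−2) for k ≥ 2 acts on the corresponding bigraded 𝔽₂-vector space of dimension 5, such that the generator in bidegree (0,6) survives to the final page and the final page has total dimension 3. Then necessarily D² has exactly one nonzero matrix entry, from bidegree (2,10) to bidegree (4,12), all higher differentials vanish, and E³ = E^∞ has Poincaré polynomial h⁰q⁶ + h³q¹² + h⁵q¹⁶. -/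
/-- Dimension function of the reduced Khovanov homology of `T(3,4)` over 𝔽₂
(the `E²` page), with bidegrees (homological grading, quantum grading). -/
def khT34 : ℤ × ℤ → ℕ := fun p =>
  if p = (0, 6) ∨ p = (2, 10) ∨ p = (3, 12) ∨ p = (4, 12) ∨ p = (5, 16)
    then 1 else 0

/-- The forced `E³ = E^∞` page for `T(3,4)`: `h⁰q⁶ + h³q¹² + h⁵q¹⁶`. -/
def EinfT34 : ℤ × ℤ → ℕ := fun p =>
  if p = (0, 6) ∨ p = (3, 12) ∨ p = (5, 16) then 1 else 0

/-- Spectral-sequence bookkeeping for `T(3,4)`: `f k` is the dimension function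
of the `E^k` page and `r k (i,j)` the rank of the component of `D^k`
(bidegree `(k, 2k−2)`) starting at `(i,j)`.  Hypotheses: `E² = Kh(T(3,4))`;
rank bounds and `(D^k)² = 0`; the page recursion; the generator in bidegree
`(0,6)` survives; and the stable page has total dimension 3.  Conclusion: the
only nonzero differential component is `D²` from `(2,10)` to `(4,12)`, of rank
1, and `E^k = h⁰q⁶ + h³q¹² + h⁵q¹⁶` for all `k ≥ 3`. -/
theorem stmt16 (f : ℕ → ℤ × ℤ → ℕ) (r : ℕ → ℤ × ℤ → ℕ)
    (hE2 : f 2 = khT34)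
    (hrank : ∀ k, 2 ≤ k → ∀ i j : ℤ,
      r k (i, j) ≤ f k (i, j) ∧
      r k (i - (k : ℤ), j - (2 * (k : ℤ) - 2)) + r k (i, j) ≤ f k (i, j))
    (hrec : ∀ k, 2 ≤ k → ∀ i j : ℤ,
      f (k + 1) (i, j)
        = f k (i, j) - r k (i, j) - r k (i - (k : ℤ), j - (2 * (k : ℤ) - 2)))
    (hsurv : ∀ k, 2 ≤ k → f k (0, 6) = 1)
    (hfin : ∃ K, 2 ≤ K ∧ (∀ k, K ≤ k → ∀ p, r k p = 0) ∧
      f K (0, 6) + f K (2, 10) + f K (3, 12) + f K (4, 12) + f K (5, 16) = 3) :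
    r 2 (2, 10) = 1 ∧
    (∀ k, 2 ≤ k → ∀ p : ℤ × ℤ, ¬(k = 2 ∧ p = (2, 10)) → r k p = 0) ∧
    (∀ k, 3 ≤ k → f k = EinfT34) := by
  obtain ⟨K, hK2, hKr, hKsum⟩ := hfin
  have hkh : ∀ i j : ℤ, khT34 (i, j) =
      if (i = 0 ∧ j = 6) ∨ (i = 2 ∧ j = 10) ∨ (i = 3 ∧ j = 12) ∨ (i = 4 ∧ j = 12)
        ∨ (i = 5 ∧ j = 16) then 1 else 0 := by
    intro i j; simp [khT34, Prod.ext_iff]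
  have hf2 : ∀ i j : ℤ, f 2 (i, j) = khT34 (i, j) := by intro i j; rw [hE2]
  -- generic "target is zero ⇒ source rank is zero"
  have key : ∀ k, 2 ≤ k → ∀ i j : ℤ, f k (i + k, j + (2 * (k : ℤ) - 2)) = 0 →
      r k (i, j) = 0 := by
    intro k hk i j h0
    have h := (hrank k hk (i + k) (j + (2 * (k : ℤ) - 2))).2
    simp only [add_sub_cancel_right] at h
    omega
  -- page-2 differentials vanish away from (2,10)
  have hr2 : ∀ i j : ℤ, ¬(i = 2 ∧ j = 10) → r 2 (i, j) = 0 := by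
    intro i j hne
    by_cases hs : (i = 0 ∧ j = 6) ∨ (i = 3 ∧ j = 12) ∨ (i = 4 ∧ j = 12) ∨ (i = 5 ∧ j = 16)
    · apply key 2 le_rfl i j
      rw [show ((2:ℕ):ℤ) = 2 by norm_num, show (2 * (2:ℤ) - 2) = 2 by norm_num,
        hf2, hkh, if_neg (by omega)]
    · have h1 := (hrank 2 le_rfl i j).1
      rw [hf2, hkh, if_neg (by omega)] at h1
      omega
  have ha1 : r 2 (2, 10) ≤ 1 := by
    have h2 := (hrank 2 le_rfl 4 12).2
    rw [hf2, hkh] at h2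
    norm_num at h2
    omega
  -- page 3
  have hf3 : ∀ i j : ℤ, f 3 (i, j) = khT34 (i, j)
      - (if i = 2 ∧ j = 10 then r 2 (2, 10) else 0)
      - (if i = 4 ∧ j = 12 then r 2 (2, 10) else 0) := by
    intro i j
    have h := hrec 2 le_rfl i j
    rw [hf2] at h
    norm_num at h
    rw [show (3:ℕ) = 2 + 1 by rfl, h]
    have e1 : r 2 (i, j) = if i = 2 ∧ j = 10 then r 2 (2, 10) else 0 := by
      split_ifs with hc
      · obtain ⟨rfl, rfl⟩ := hc; rfl
      · exact hr2 i j hc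
    have e2 : r 2 (i - 2, j - 2) = if i = 4 ∧ j = 12 then r 2 (2, 10) else 0 := by
      split_ifs with hc
      · obtain ⟨rfl, rfl⟩ := hc; norm_num
      · exact hr2 _ _ (by omega)
    rw [e1, e2]
  -- ranks vanish on pages ≥ 3
  have hstep : ∀ k, 3 ≤ k → (∀ i j : ℤ, f k (i, j) = f 3 (i, j)) →
      ∀ i j : ℤ, r k (i, j) = 0 := by
    intro k hk hf i j
    have hk2 : 2 ≤ k := by omega
    have hkz : (3:ℤ) ≤ (k:ℤ) := by exact_mod_cast hk
    by_cases h06 : i = 0 ∧ j = 6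
    · obtain ⟨rfl, rfl⟩ := h06
      have h1 := hsurv k hk2
      have h2 := hsurv (k + 1) (by omega)
      have h3 := hrec k hk2 0 6
      omega
    · by_cases hmem : (i = 0 ∧ j = 6) ∨ (i = 2 ∧ j = 10) ∨ (i = 3 ∧ j = 12)
        ∨ (i = 4 ∧ j = 12) ∨ (i = 5 ∧ j = 16)
      · apply key k hk2 i j
        rw [hf, hf3, hkh, if_neg (by omega)]
        simp
      · have h1 := (hrank k hk2 i j).1
        rw [hf, hf3, hkh, if_neg (by omega)] at h1
        omega
  -- pages stabilize from 3 on
  have hfk : ∀ k, 3 ≤ k → ∀ i j : ℤ, f k (i, j) = f 3 (i, j) := by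
    intro k hk
    induction k, hk using Nat.le_induction with
    | base => intro i j; rfl
    | succ n hn ih =>
      intro i j
      have hr0 := hstep n hn ih
      have h := hrec n (by omega) i j
      rw [h, hr0, hr0, ih]
      omega
  -- the dimension count forces rank 1
  have ha : r 2 (2, 10) = 1 := by
    rcases Nat.lt_or_ge K 3 with hK3 | hK3
    · have hK : K = 2 := by omega
      subst hK
      rw [hE2] at hKsum
      norm_num [khT34] at hKsum
    · rw [hfk K hK3, hfk K hK3, hfk K hK3, hfk K hK3, hfk K hK3] at hKsum
      have h06 := hf3 0 6
      have h210 := hf3 2 10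
      have h312 := hf3 3 12
      have h412 := hf3 4 12
      have h516 := hf3 5 16
      simp only [hkh] at h06 h210 h312 h412 h516
      norm_num at h06 h210 h312 h412 h516
      omega
  refine ⟨ha, ?_, ?_⟩
  · intro k hk p hne
    obtain ⟨i, j⟩ := p
    rcases eq_or_lt_of_le hk with hk2 | hk3
    · subst hk2
      exact hr2 i j (by rintro ⟨rfl, rfl⟩; exact hne ⟨rfl, rfl⟩)
    · exact hstep k (by omega) (hfk k (by omega)) i j
  · intro k hk
    funext p
    obtain ⟨i, j⟩ := p
    rw [hfk k hk i j, hf3 i j, ha, hkh]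
    simp only [EinfT34, Prod.mk.injEq]
    split_ifs <;> omega
end
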